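/- Let F₂ be the free group on two generators a, b, let ρ : F₂ → SL(2,ℝ) be a homomorphism with g = ρ(a), h = ρ(b), and suppose Tr(g·h·g⁻¹·h⁻¹) > 2 and the subgroup of SL(2,ℝ) generated by g and h is not virtually abelian. Then there exist an automorphism φ of F₂ and signs ε, δ ∈ {1, −1} such that ε·Tr(ρ(φ(a))) > 2, δ·Tr(ρ(φ(b))) > 2, and ε·δ·Tr(ρ(φ(a·b))) > 2. (That is, after a change of free basis of F₂ and a choice of lifts to SL(2,ℝ), all three traces can be made greater than 2.) -/

import Mathlib

/-- The trace of an element of SL(2,ℝ), viewed as a 2×2 real matrix. -/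
def trSL (g : Matrix.SpecialLinearGroup (Fin 2) ℝ) : ℝ :=
  Matrix.trace (g : Matrix (Fin 2) (Fin 2) ℝ)

/-- A group is virtually abelian if it has an abelian subgroup of finite index. -/
def IsVirtuallyAbelian (G : Type*) [Group G] : Prop :=
  ∃ H : Subgroup G, H.FiniteIndex ∧ ∀ a b : H, a * b = b * a

/-!
Write `x, y, z` for the traces of `g, h, gh`. Precomposing `ρ` with suitable automorphisms of
`F₂` permutes `(x, y, z)` or replaces `z` by `xy - z` (a Vieta flip), and these moves preserve
`κ = x² + y² + z² - xyz - 2 = tr [g, h]`. If the whole orbit of `(x, y, z)` stayed in the cube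
`[-2, 2]³`, the sum of squares would attain a maximum on its closure, yet at a point of the cube
with `κ > 2` some Vieta flip strictly increases it. So some trace, say `x`, has `|x| > 2`.
Fixing `x` and flipping `y` or `z` multiplies `max (|y|, |z|)` by at least `|x| - 1 > 1`, unless
`y = z = 0`: then `h` and `gh` square to `-1`, so `h` conjugates `g` to `g⁻¹` and `⟨g, h⟩` is
virtually abelian. Once `|x|, |y|, |z| > 2`, one more flip makes `xyz > 0`, and `ε, δ` are the
signs of `x` and `y`.
-/

open Metric

-- Fricke's polynomial: `tr [g, h]` as a function of `(tr g, tr h, tr gh)`.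
def kappa (v : ℝ × ℝ × ℝ) : ℝ := v.1 ^ 2 + v.2.1 ^ 2 + v.2.2 ^ 2 - v.1 * v.2.1 * v.2.2 - 2

def VietaInvariant (T : Set (ℝ × ℝ × ℝ)) : Prop :=
  ∀ ⦃x y z : ℝ⦄, (x, y, z) ∈ T → (y, x, z) ∈ T ∧ (x, z, y) ∈ T ∧ (x, y, x * y - z) ∈ T

theorem vietaInvariant_kappa_eq (c : ℝ) : VietaInvariant {v | kappa v = c} := by
  intro x y z h
  simp only [Set.mem_ofPred_eq, kappa] at h ⊢
  refine ⟨?_, ?_, ?_⟩ <;> linear_combination h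

theorem kappa_le_two_of_pos {a b c : ℝ} (ha : 0 < a) (hb : 0 < b) (ha2 : a ≤ 2) (hb2 : b ≤ 2)
    (hab : a * b ≤ 2 * c) (hbc : b * c ≤ 2 * a) (hca : c * a ≤ 2 * b) : kappa (a, b, c) ≤ 2 := by
  wlog hle : a ≤ b generalizing a b
  · have := this hb ha hb2 ha2 (by linarith) (by linarith) (by linarith) (by linarith)
    simp only [kappa] at this ⊢
    linarith
  -- `4 (2 - κ) = (4 - a²)(4 - b²) - (2c - ab)²`
  have h1 : b * (2 * c - a * b) ≤ a * (4 - b ^ 2) := by nlinarith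
  have h2 : (b * (2 * c - a * b)) ^ 2 ≤ (a * (4 - b ^ 2)) ^ 2 :=
    pow_le_pow_left₀ (by nlinarith) h1 2
  have h3 : a ^ 2 * (4 - b ^ 2) ^ 2 ≤ b ^ 2 * ((4 - a ^ 2) * (4 - b ^ 2)) := by
    nlinarith [mul_nonneg (sub_nonneg.2 (show b ^ 2 ≤ 4 by nlinarith))
      (sub_nonneg.2 (show a ^ 2 ≤ b ^ 2 by nlinarith))]
  have h4 : (2 * c - a * b) ^ 2 ≤ (4 - a ^ 2) * (4 - b ^ 2) :=
    le_of_mul_le_mul_left (by nlinarith) (by positivity : 0 < b ^ 2)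
  simp only [kappa]
  nlinarith

theorem exists_vieta_flip_sq_lt {x y z : ℝ} (hx : |x| ≤ 2) (hy : |y| ≤ 2) (hz : |z| ≤ 2)
    (hκ : 2 < kappa (x, y, z)) :
    x ^ 2 < (y * z - x) ^ 2 ∨ y ^ 2 < (x * z - y) ^ 2 ∨ z ^ 2 < (x * y - z) ^ 2 := by
  by_contra! h
  obtain ⟨h1, h2, h3⟩ := h
  simp only [kappa] at hκ
  have hP : 0 ≤ x * y * z := by nlinarith
  rcases hP.lt_or_eq with hP | hP
  · have hxyz : x * y * z = |x| * |y| * |z| := by rw [← abs_mul, ← abs_mul, abs_of_pos hP]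
    have hx0 : 0 < |x| := abs_pos.2 (by rintro rfl; simp at hP)
    have hy0 : 0 < |y| := abs_pos.2 (by rintro rfl; simp at hP)
    have hz0 : 0 < |z| := abs_pos.2 (by rintro rfl; simp at hP)
    have key : ∀ {p q r : ℝ}, 0 < p → 0 < q → (p * q) ^ 2 ≤ 2 * (p * q * r) → p * q ≤ 2 * r :=
      fun hp hq h => by nlinarith [mul_pos hp hq]
    have := kappa_le_two_of_pos hx0 hy0 hx hy (key hx0 hy0 ?_) (key hy0 hz0 ?_) (key hz0 hx0 ?_)
    · simp only [kappa, sq_abs] at this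
      linarith
    all_goals rw [mul_pow, sq_abs, sq_abs]; nlinarith
  · -- now `xy = yz = zx = 0`, so at most one coordinate is nonzero
    have hx2 : x ^ 2 ≤ 4 := by nlinarith [sq_abs x, abs_nonneg x]
    have hy2 : y ^ 2 ≤ 4 := by nlinarith [sq_abs y, abs_nonneg y]
    have hz2 : z ^ 2 ≤ 4 := by nlinarith [sq_abs z, abs_nonneg z]
    nlinarith [mul_nonneg (sq_nonneg x) (sub_nonneg.2 hx2),
      mul_nonneg (sq_nonneg y) (sub_nonneg.2 hy2), mul_nonneg (sq_nonneg z) (sub_nonneg.2 hz2)]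

namespace VietaInvariant

variable {T : Set (ℝ × ℝ × ℝ)} {x y z : ℝ}

theorem swap12 (hT : VietaInvariant T) (h : (x, y, z) ∈ T) : (y, x, z) ∈ T := (hT h).1

theorem swap23 (hT : VietaInvariant T) (h : (x, y, z) ∈ T) : (x, z, y) ∈ T := (hT h).2.1

theorem vieta3 (hT : VietaInvariant T) (h : (x, y, z) ∈ T) : (x, y, x * y - z) ∈ T := (hT h).2.2

theorem vieta2 (hT : VietaInvariant T) (h : (x, y, z) ∈ T) : (x, x * z - y, z) ∈ T :=
  hT.swap23 (hT.vieta3 (hT.swap23 h))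

theorem vieta1 (hT : VietaInvariant T) (h : (x, y, z) ∈ T) : (y * z - x, y, z) ∈ T :=
  hT.swap12 (hT.vieta2 (hT.swap12 h))

theorem inter {S : Set (ℝ × ℝ × ℝ)} (hT : VietaInvariant T) (hS : VietaInvariant S) :
    VietaInvariant (T ∩ S) :=
  fun _ _ _ h => ⟨⟨hT.swap12 h.1, hS.swap12 h.2⟩, ⟨hT.swap23 h.1, hS.swap23 h.2⟩,
    ⟨hT.vieta3 h.1, hS.vieta3 h.2⟩⟩

protected theorem closure (hT : VietaInvariant T) : VietaInvariant (closure T) := by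
  intro x y z h
  refine ⟨?_, ?_, ?_⟩
  · exact map_mem_closure (f := fun v => (v.2.1, v.1, v.2.2)) (by fun_prop) h
      fun ⟨_, _, _⟩ hv => hT.swap12 hv
  · exact map_mem_closure (f := fun v => (v.1, v.2.2, v.2.1)) (by fun_prop) h
      fun ⟨_, _, _⟩ hv => hT.swap23 hv
  · exact map_mem_closure (f := fun v => (v.1, v.2.1, v.1 * v.2.1 - v.2.2)) (by fun_prop) h
      fun ⟨_, _, _⟩ hv => hT.vieta3 hv

-- `‖·‖` is the sup norm on `ℝ × ℝ × ℝ`, so `closedBall 0 2` is the cube `[-2, 2]³`.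
theorem exists_two_lt_norm (hT : VietaInvariant T) {v : ℝ × ℝ × ℝ} (hv : v ∈ T)
    (hκ : 2 < kappa v) : ∃ w ∈ T, 2 < ‖w‖ := by
  by_contra! hle
  set S := T ∩ {w | kappa w = kappa v}
  have hS : VietaInvariant (closure S) := (hT.inter (vietaInvariant_kappa_eq _)).closure
  have hS_ball : closure S ⊆ closedBall 0 2 :=
    closure_minimal (fun w hw => mem_closedBall_zero_iff.2 (hle w hw.1)) isClosed_closedBall
  have hS_kappa : closure S ⊆ {w | kappa w = kappa v} :=
    closure_minimal Set.inter_subset_right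
      (isClosed_eq (by unfold kappa; fun_prop) continuous_const)
  obtain ⟨⟨x, y, z⟩, hw, hmax⟩ := ((isCompact_closedBall 0 2).of_isClosed_subset isClosed_closure
    hS_ball).exists_isMaxOn ⟨v, subset_closure ⟨hv, rfl⟩⟩
    (f := fun w : ℝ × ℝ × ℝ => w.1 ^ 2 + w.2.1 ^ 2 + w.2.2 ^ 2) (by fun_prop)
  have hnorm := mem_closedBall_zero_iff.1 (hS_ball hw)
  have hx : |x| ≤ 2 := (norm_fst_le _).trans hnorm
  have hy : |y| ≤ 2 := ((norm_fst_le _).trans (norm_snd_le (x, y, z))).trans hnorm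
  have hz : |z| ≤ 2 := ((norm_snd_le _).trans (norm_snd_le (x, y, z))).trans hnorm
  have hκw : 2 < kappa (x, y, z) := (hS_kappa hw).symm ▸ hκ
  rcases exists_vieta_flip_sq_lt hx hy hz hκw with h | h | h
  · linarith [isMaxOn_iff.1 hmax _ (hS.vieta1 hw)]
  · linarith [isMaxOn_iff.1 hmax _ (hS.vieta2 hw)]
  · linarith [isMaxOn_iff.1 hmax _ (hS.vieta3 hw)]

theorem exists_two_lt_abs_fst (hT : VietaInvariant T) {v : ℝ × ℝ × ℝ} (hv : v ∈ T)
    (hκ : 2 < kappa v) : ∃ x y z, (x, y, z) ∈ T ∧ 2 < |x| := by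
  obtain ⟨⟨x, y, z⟩, hw, hnorm⟩ := hT.exists_two_lt_norm hv hκ
  simp only [Prod.norm_def, Real.norm_eq_abs, lt_max_iff] at hnorm
  rcases hnorm with h | h | h
  · exact ⟨x, y, z, hw, h⟩
  · exact ⟨y, x, z, hT.swap12 hw, h⟩
  · exact ⟨z, x, y, hT.swap12 (hT.swap23 hw), h⟩

theorem exists_mul_max_abs_le (hT : VietaInvariant T) (h : (x, y, z) ∈ T) :
    ∃ y' z', (x, y', z') ∈ T ∧ max |y| |z| ≤ |y'| ∧ (|x| - 1) * max |y| |z| ≤ |z'| := by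
  rcases le_total |z| |y| with hzy | hyz
  · refine ⟨y, x * y - z, hT.vieta3 h, (max_eq_left hzy).le, ?_⟩
    rw [max_eq_left hzy]
    have := abs_sub_abs_le_abs_sub (x * y) z
    rw [abs_mul] at this
    linarith
  · refine ⟨z, x * z - y, hT.swap23 (hT.vieta2 h), (max_eq_right hyz).le, ?_⟩
    rw [max_eq_right hyz]
    have := abs_sub_abs_le_abs_sub (x * z) y
    rw [abs_mul] at this
    linarith

theorem exists_pow_mul_max_abs_le (hT : VietaInvariant T) (hx : 1 ≤ |x|) (n : ℕ) :
    ∀ {y z}, (x, y, z) ∈ T →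
      ∃ y' z', (x, y', z') ∈ T ∧ (|x| - 1) ^ n * max |y| |z| ≤ max |y'| |z'| := by
  induction n with
  | zero => intro y z h; exact ⟨y, z, h, by simp⟩
  | succ n ih =>
    intro y z h
    obtain ⟨y₁, z₁, h₁, -, hz₁⟩ := hT.exists_mul_max_abs_le h
    obtain ⟨y₂, z₂, h₂, hle⟩ := ih h₁
    refine ⟨y₂, z₂, h₂, le_trans ?_ hle⟩
    calc (|x| - 1) ^ (n + 1) * max |y| |z| = (|x| - 1) ^ n * ((|x| - 1) * max |y| |z|) := by ring
      _ ≤ (|x| - 1) ^ n * max |y₁| |z₁| :=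
        mul_le_mul_of_nonneg_left (hz₁.trans (le_max_right _ _)) (pow_nonneg (by linarith) n)

theorem exists_two_lt_abs_snd_thd (hT : VietaInvariant T) (h : (x, y, z) ∈ T) (hx : 2 < |x|)
    (hyz : y ≠ 0 ∨ z ≠ 0) : ∃ y' z', (x, y', z') ∈ T ∧ 2 < |y'| ∧ 2 < |z'| := by
  have hm : 0 < max |y| |z| := by
    rcases hyz with hy | hz
    · exact lt_max_of_lt_left (abs_pos.2 hy)
    · exact lt_max_of_lt_right (abs_pos.2 hz)
  obtain ⟨n, hn⟩ := pow_unbounded_of_one_lt (2 / max |y| |z|) (by linarith : 1 < |x| - 1)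
  obtain ⟨y₁, z₁, h₁, hle⟩ := hT.exists_pow_mul_max_abs_le (by linarith) n h
  rw [div_lt_iff₀ hm] at hn
  obtain ⟨y₂, z₂, h₂, hy₂, hz₂⟩ := hT.exists_mul_max_abs_le h₁
  exact ⟨y₂, z₂, h₂, by linarith, by nlinarith⟩

theorem exists_pos_mul (hT : VietaInvariant T) (h : (x, y, z) ∈ T) (hx : 2 < |x|)
    (hy : 2 < |y|) (hz : 2 < |z|) : ∃ z', (x, y, z') ∈ T ∧ 2 < |z'| ∧ 0 < x * y * z' := by
  by_cases hpos : 0 < x * y * z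
  · exact ⟨z, h, hz, hpos⟩
  have hz2 : 2 ^ 2 < z ^ 2 := by nlinarith [sq_abs z, abs_nonneg z]
  have hxy : 0 < (x * y) ^ 2 := by
    rw [← sq_abs, abs_mul]
    have : 0 < |x| * |y| := by nlinarith
    positivity
  refine ⟨x * y - z, hT.vieta3 h, ?_, by nlinarith⟩
  simpa using sq_lt_sq.1 (show 2 ^ 2 < (x * y - z) ^ 2 by nlinarith)

theorem exists_pos_mul_of_two_lt_kappa (hT : VietaInvariant T) (hdeg : ∀ x, (x, 0, 0) ∉ T)
    {v : ℝ × ℝ × ℝ} (hv : v ∈ T) (hκ : 2 < kappa v) :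
    ∃ x y z, (x, y, z) ∈ T ∧ 2 < |x| ∧ 2 < |y| ∧ 2 < |z| ∧ 0 < x * y * z := by
  obtain ⟨x, y, z, h, hx⟩ := hT.exists_two_lt_abs_fst hv hκ
  have hyz : y ≠ 0 ∨ z ≠ 0 := by
    by_contra! h0
    obtain ⟨rfl, rfl⟩ := h0
    exact hdeg x h
  obtain ⟨y', z', h', hy', hz'⟩ := hT.exists_two_lt_abs_snd_thd h hx hyz
  obtain ⟨z'', h'', hz'', hpos⟩ := hT.exists_pos_mul h' hx hy' hz'
  exact ⟨x, y', z'', h'', hx, hy', hz'', hpos⟩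

end VietaInvariant

theorem exists_signs_of_two_lt_abs {x y z : ℝ} (hx : 2 < |x|) (hy : 2 < |y|) (hz : 2 < |z|)
    (hpos : 0 < x * y * z) : ∃ ε δ : ℝ, (ε = 1 ∨ ε = -1) ∧ (δ = 1 ∨ δ = -1) ∧
      2 < ε * x ∧ 2 < δ * y ∧ 2 < ε * δ * z := by
  have sign : ∀ {t : ℝ}, 2 < |t| → ∃ ε : ℝ, (ε = 1 ∨ ε = -1) ∧ 2 < ε * t := fun ht => by
    rcases lt_abs.1 ht with h | h
    · exact ⟨1, Or.inl rfl, by linarith⟩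
    · exact ⟨-1, Or.inr rfl, by linarith⟩
  obtain ⟨ε, hε, hεx⟩ := sign hx
  obtain ⟨δ, hδ, hδy⟩ := sign hy
  refine ⟨ε, δ, hε, hδ, hεx, hδy, ?_⟩
  have hεδ : ε * δ * z * ((ε * x) * (δ * y)) = x * y * z := by
    rcases hε with rfl | rfl <;> rcases hδ with rfl | rfl <;> ring
  have hεδz : 0 < ε * δ * z := pos_of_mul_pos_left (hεδ ▸ hpos) (by positivity)
  have habs : |ε * δ * z| = |z| := by
    rcases hε with rfl | rfl <;> rcases hδ with rfl | rfl <;> simp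
  rwa [← habs, abs_of_pos hεδz] at hz

section Dihedral

variable {G : Type*} [Group G] {g t : G}

theorem mul_mul_inv_eq_inv_of_mul_self_eq (h : g * t * (g * t) = t * t) : t * g * t⁻¹ = g⁻¹ :=
  calc t * g * t⁻¹ = g⁻¹ * (g * t * (g * t)) * (t * t)⁻¹ := by group
    _ = g⁻¹ := by rw [h]; group

theorem mul_self_mul_comm_of_mul_mul_inv_eq_inv (h : t * g * t⁻¹ = g⁻¹) :
    t * t * g = g * (t * t) :=
  calc t * t * g = t * (t * g * t⁻¹) * t := by group
    _ = (t * g⁻¹ * t⁻¹) * (t * t) := by rw [h]; group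
    _ = (t * g * t⁻¹)⁻¹ * (t * t) := by group
    _ = g * (t * t) := by rw [h, inv_inv]

theorem inv_mul_mul_eq_inv_of_mul_mul_inv_eq_inv (h : t * g * t⁻¹ = g⁻¹) :
    t⁻¹ * g * t = g⁻¹ :=
  calc t⁻¹ * g * t = ((t * t)⁻¹ * (t * g * t⁻¹)⁻¹ * (t * t))⁻¹ := by group
    _ = ((t * t)⁻¹ * (g * (t * t)))⁻¹ := by rw [h, inv_inv, mul_assoc]
    _ = g⁻¹ := by rw [← mul_self_mul_comm_of_mul_mul_inv_eq_inv h]; group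

theorem Subgroup.finiteIndex_subgroupOf_of_mem_or_inv_mul_mem {K A : Subgroup G} (ht : t ∈ K)
    (hcover : ∀ k ∈ K, k ∈ A ∨ t⁻¹ * k ∈ A) : (A.subgroupOf K).FiniteIndex := by
  classical
  refine finiteIndex_of_leftCoset_cover_const (s := {1, ⟨t, ht⟩}) (g := id) ?_
  ext ⟨k, hk⟩
  simpa [mem_leftCoset_iff, Subgroup.mem_subgroupOf] using hcover k hk

theorem Subgroup.mem_or_inv_mul_mem_of_mem_closure_pair {A : Subgroup G} (hg : g ∈ A)
    (htt : t * t ∈ A) (hconj : ∀ a ∈ A, t⁻¹ * a * t ∈ A) {k : G}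
    (hk : k ∈ Subgroup.closure {g, t}) : k ∈ A ∨ t⁻¹ * k ∈ A := by
  induction hk using Subgroup.closure_induction_left with
  | one => exact Or.inl A.one_mem
  | mul_left x hx k _ ih =>
    rcases hx with rfl | rfl <;> rcases ih with hk | hk
    · exact Or.inl (A.mul_mem hg hk)
    · exact Or.inr (by convert A.mul_mem (hconj x hg) hk using 1; group)
    · exact Or.inr (by rwa [inv_mul_cancel_left])
    · exact Or.inl (by convert A.mul_mem htt hk using 1; group)
  | inv_mul_cancel x hx k _ ih =>
    rcases hx with rfl | rfl <;> rcases ih with hk | hk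
    · exact Or.inl (A.mul_mem (A.inv_mem hg) hk)
    · exact Or.inr (by convert A.mul_mem (A.inv_mem (hconj x hg)) hk using 1; group)
    · exact Or.inr (by convert A.mul_mem (A.inv_mem htt) hk using 1; group)
    · exact Or.inl hk

open Subgroup in
/-- `⟨g, t * t⟩` is abelian, normalized by `t`, and of index at most two. -/
theorem isVirtuallyAbelian_closure_of_mul_mul_inv_eq_inv (h : t * g * t⁻¹ = g⁻¹) :
    IsVirtuallyAbelian (closure {g, t}) := by
  set A := closure {g, t * t}
  have hgA : g ∈ A := subset_closure (by simp)
  have httA : t * t ∈ A := subset_closure (by simp)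
  have hA_comm : ∀ a ∈ A, ∀ b ∈ A, a * b = b * a := by
    have hgtt := mul_self_mul_comm_of_mul_mul_inv_eq_inv h
    refine fun a ha b hb => Set.centralizer_centralizer_comm_of_comm ?_ a
      (closure_le_centralizer_centralizer _ ha) b (closure_le_centralizer_centralizer _ hb)
    simp only [Set.mem_insert_iff, Set.mem_singleton_iff]
    rintro x (rfl | rfl) y (rfl | rfl) <;> first | rfl | exact hgtt | exact hgtt.symm
  have hA_conj : ∀ a ∈ A, t⁻¹ * a * t ∈ A := by
    intro a ha
    have : A ≤ A.comap (MulAut.conj t⁻¹).toMonoidHom := by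
      rw [closure_le]
      simp only [Set.insert_subset_iff, Set.singleton_subset_iff, SetLike.mem_coe, mem_comap,
        MulEquiv.coe_toMonoidHom, MulAut.conj_apply, inv_inv,
        inv_mul_mul_eq_inv_of_mul_mul_inv_eq_inv h]
      exact ⟨inv_mem hgA, by group; exact httA⟩
    simpa using this ha
  refine ⟨A.subgroupOf _, finiteIndex_subgroupOf_of_mem_or_inv_mul_mem (subset_closure (by simp))
    fun k hk => mem_or_inv_mul_mem_of_mem_closure_pair hgA httA hA_conj hk, ?_⟩
  rintro ⟨⟨a, -⟩, ha⟩ ⟨⟨b, -⟩, hb⟩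
  ext
  exact hA_comm a ha b hb

end Dihedral

local notation "SL₂" => Matrix.SpecialLinearGroup (Fin 2) ℝ
local notation "M₂" => Matrix (Fin 2) (Fin 2) ℝ
local notation "F₂" => FreeGroup (Fin 2)

section TraceIdentities

open Matrix

theorem trace_mul_adjugate_fin_two (A B : M₂) :
    trace (A * adjugate B) = trace A * trace B - trace (A * B) := by
  rw [eta_fin_two A, eta_fin_two B]
  simp [adjugate_fin_two, trace_fin_two]
  ring

theorem trace_commutator_fin_two (A B : M₂) :
    trace (A * B * adjugate A * adjugate B) = A.det * trace B ^ 2 + B.det * trace A ^ 2 +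
      trace (A * B) ^ 2 - trace A * trace B * trace (A * B) - 2 * A.det * B.det := by
  rw [eta_fin_two A, eta_fin_two B]
  simp [adjugate_fin_two, trace_fin_two, det_fin_two]
  ring

theorem mul_self_fin_two (A : M₂) : A * A = trace A • A - A.det • 1 := by
  rw [eta_fin_two A]
  ext i j
  fin_cases i <;> fin_cases j <;> simp [trace_fin_two, det_fin_two] <;> ring

theorem trSL_mul (g h : SL₂) : trSL (g * h) = trace ((g : M₂) * (h : M₂)) := rfl

theorem trSL_mul_comm (g h : SL₂) : trSL (g * h) = trSL (h * g) :=
  trace_mul_comm (g : M₂) h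

theorem trSL_mul_inv (g h : SL₂) : trSL (g * h⁻¹) = trSL g * trSL h - trSL (g * h) :=
  trace_mul_adjugate_fin_two g h

theorem trSL_inv (g : SL₂) : trSL g⁻¹ = trSL g := by
  have h := trSL_mul_inv 1 g
  rw [one_mul, one_mul] at h
  rw [h, show trSL 1 = 2 by simp [trSL]]
  ring

theorem trSL_commutator (g h : SL₂) :
    trSL (g * h * g⁻¹ * h⁻¹) = kappa (trSL g, trSL h, trSL (g * h)) := by
  have e : trSL (g * h * g⁻¹ * h⁻¹) =
      trace ((g : M₂) * (h : M₂) * adjugate (g : M₂) * adjugate (h : M₂)) := rfl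
  rw [e, trace_commutator_fin_two, g.2, h.2, trSL_mul]
  unfold trSL kappa
  ring

theorem trSL_mul_mul_inv (g h : SL₂) : trSL (g * (g * h)⁻¹) = trSL h := by
  rw [trSL_mul_comm, _root_.mul_inv_rev, inv_mul_cancel_right, trSL_inv]

theorem mul_self_eq_neg_one_of_trSL_eq_zero {g : SL₂} (h : trSL g = 0) : g * g = -1 := by
  ext : 1
  simp [mul_self_fin_two, show trace (g : M₂) = 0 from h]

end TraceIdentities

section Automorphisms

open FreeGroup

theorem closure_pair_eq_range {G : Type*} [Group G] (f : F₂ →* G) :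
    Subgroup.closure {f (of 0), f (of 1)} = f.range := by
  rw [MonoidHom.range_eq_map, ← closure_range_of, MonoidHom.map_closure, ← Set.range_comp]
  congr 1
  ext
  simp [Fin.exists_fin_two, eq_comm]

theorem closure_pair_comp_mulAut {G : Type*} [Group G] (f : F₂ →* G) (φ : MulAut F₂) :
    Subgroup.closure {f (φ (of 0)), f (φ (of 1))} = Subgroup.closure {f (of 0), f (of 1)} := by
  have := closure_pair_eq_range (f.comp φ.toMonoidHom)
  simp only [MonoidHom.comp_apply, MulEquiv.coe_toMonoidHom] at this
  rw [this, MonoidHom.range_comp, MonoidHom.range_eq_top.2 φ.surjective, ← MonoidHom.range_eq_map,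
    closure_pair_eq_range]

-- On trace triples these induce `(x, y, z) ↦ (x, y, xy - z)` and `(x, y, z) ↦ (x, z, y)`.
def invSndAut : MulAut F₂ :=
  let f : F₂ →* F₂ := lift ![of 0, (of 1)⁻¹]
  f.toMulEquiv f (by ext i; fin_cases i <;> simp [f]) (by ext i; fin_cases i <;> simp [f])

def mulInvSndAut : MulAut F₂ :=
  (lift ![of 0, (of 0 * of 1)⁻¹]).toMulEquiv (lift ![of 0, (of 0)⁻¹ * (of 1)⁻¹])
    (by ext i; fin_cases i <;> simp) (by ext i; fin_cases i <;> simp)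

theorem mulInvSndAut_of_zero : mulInvSndAut (of 0) = of 0 := by simp [mulInvSndAut]

theorem mulInvSndAut_of_one : mulInvSndAut (of 1) = (of 0 * of 1)⁻¹ := by simp [mulInvSndAut]

def traceTriple (g h : SL₂) : ℝ × ℝ × ℝ := (trSL g, trSL h, trSL (g * h))

def basisTraceTriples (ρ : F₂ →* SL₂) : Set (ℝ × ℝ × ℝ) :=
  Set.range fun φ : MulAut F₂ => traceTriple (ρ (φ (of 0))) (ρ (φ (of 1)))

theorem vietaInvariant_basisTraceTriples (ρ : F₂ →* SL₂) :
    VietaInvariant (basisTraceTriples ρ) := by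
  rintro x y z ⟨φ, hφ⟩
  simp only [traceTriple, Prod.mk.injEq] at hφ
  obtain ⟨rfl, rfl, rfl⟩ := hφ
  refine ⟨⟨(freeGroupCongr (Equiv.swap 0 1)).trans φ, ?_⟩, ⟨mulInvSndAut.trans φ, ?_⟩,
    ⟨invSndAut.trans φ, ?_⟩⟩
  · simp [traceTriple, trSL_mul_comm]
  · simp only [traceTriple, MulEquiv.trans_apply, mulInvSndAut_of_zero, mulInvSndAut_of_one,
      _root_.map_inv, _root_.map_mul, trSL_inv, trSL_mul_mul_inv]
  · simp [traceTriple, invSndAut, trSL_inv, trSL_mul_inv]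

theorem isVirtuallyAbelian_of_mem_basisTraceTriples {ρ : F₂ →* SL₂} {x : ℝ}
    (h : (x, 0, 0) ∈ basisTraceTriples ρ) :
    IsVirtuallyAbelian (Subgroup.closure {ρ (of 0), ρ (of 1)}) := by
  obtain ⟨φ, hφ⟩ := h
  simp only [traceTriple, Prod.mk.injEq] at hφ
  have hsq : ρ (φ (of 0)) * ρ (φ (of 1)) * (ρ (φ (of 0)) * ρ (φ (of 1))) =
      ρ (φ (of 1)) * ρ (φ (of 1)) := by
    rw [mul_self_eq_neg_one_of_trSL_eq_zero hφ.2.1, mul_self_eq_neg_one_of_trSL_eq_zero hφ.2.2]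
  have := isVirtuallyAbelian_closure_of_mul_mul_inv_eq_inv (mul_mul_inv_eq_inv_of_mul_self_eq hsq)
  rwa [closure_pair_comp_mulAut] at this

end Automorphisms

/-- Let `ρ : F₂ → SL(2,ℝ)` with `g = ρ a`, `h = ρ b`, `Tr[g,h] > 2` and
`⟨g,h⟩` not virtually abelian. Then there is an automorphism `φ` of `F₂` and
signs `ε, δ ∈ {±1}` such that `ε·Tr ρ(φ a) > 2`, `δ·Tr ρ(φ b) > 2` and
`ε·δ·Tr ρ(φ (a·b)) > 2`. -/
theorem stmt11 (ρ : FreeGroup (Fin 2) →* Matrix.SpecialLinearGroup (Fin 2) ℝ)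
    (g h : Matrix.SpecialLinearGroup (Fin 2) ℝ)
    (hg : g = ρ (FreeGroup.of 0)) (hh : h = ρ (FreeGroup.of 1))
    (hcomm : 2 < trSL (g * h * g⁻¹ * h⁻¹))
    (hva : ¬ IsVirtuallyAbelian
      (Subgroup.closure ({g, h} : Set (Matrix.SpecialLinearGroup (Fin 2) ℝ)))) :
    ∃ (φ : MulAut (FreeGroup (Fin 2))) (ε δ : ℝ),
      (ε = 1 ∨ ε = -1) ∧ (δ = 1 ∨ δ = -1) ∧
      2 < ε * trSL (ρ (φ (FreeGroup.of 0))) ∧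
      2 < δ * trSL (ρ (φ (FreeGroup.of 1))) ∧
      2 < ε * δ * trSL (ρ (φ (FreeGroup.of 0 * FreeGroup.of 1))) := by
  subst hg hh
  have hdeg : ∀ x, (x, 0, 0) ∉ basisTraceTriples ρ :=
    fun _ hx => hva (isVirtuallyAbelian_of_mem_basisTraceTriples hx)
  have hv : traceTriple (ρ (FreeGroup.of 0)) (ρ (FreeGroup.of 1)) ∈ basisTraceTriples ρ := ⟨1, rfl⟩
  rw [trSL_commutator] at hcomm
  obtain ⟨x, y, z, ⟨φ, hφ⟩, hx, hy, hz, hpos⟩ :=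
    (vietaInvariant_basisTraceTriples ρ).exists_pos_mul_of_two_lt_kappa hdeg hv hcomm
  simp only [traceTriple, Prod.mk.injEq] at hφ
  obtain ⟨rfl, rfl, rfl⟩ := hφ
  obtain ⟨ε, δ, hε, hδ, h₁, h₂, h₃⟩ := exists_signs_of_two_lt_abs hx hy hz hpos
  exact ⟨φ, ε, δ, hε, hδ, h₁, h₂, by rwa [map_mul, map_mul]⟩
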